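/- arXiv:2103.00041 — 7 statements merged into one kernel-verified Lean document; each statement's English description precedes it below -/
import Mathlib

section
/- Let L be a linear subspace of the space of n×n real symmetric matrices. Then exactly one of the following holds: (1) L contains a nonzero positive semidefinite matrix; (2) the orthogonal complement of L (with respect to the trace inner product) contains a positive definite matrix. -/
/-!
If `A ⪰ 0` is nonzero and `B ≻ 0`, then `tr (A B) = tr (√A B √A) > 0`, so `B` cannot be
orthogonal to `A`: at most one alternative holds. If `L` meets the positive semidefinite cone
only in `0`, it is disjoint from the compact convex spectraplex `{X ⪰ 0, tr X = 1}`. A separating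
functional vanishes on `L` and is positive on the spectraplex; represented through the trace
pairing by a symmetric `B`, it gives `xᵀ B x = f (x xᵀ) > 0` for `x ≠ 0`.
-/

theorem Submodule.exists_strongDual_eq_zero_pos_of_disjoint {E : Type*} [AddCommGroup E]
    [Module ℝ E] [TopologicalSpace E] [IsTopologicalAddGroup E] [ContinuousSMul ℝ E]
    [LocallyConvexSpace ℝ E] (L : Submodule ℝ E) (hL : IsClosed (L : Set E)) {K : Set E}
    (hKconv : Convex ℝ K) (hK : IsCompact K) (hKL : Disjoint (L : Set E) K) :
    ∃ f : StrongDual ℝ E, (∀ x ∈ L, f x = 0) ∧ ∀ x ∈ K, 0 < f x := by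
  obtain ⟨f, u, v, hfL, huv, hfK⟩ :=
    geometric_hahn_banach_closed_compact L.convex hL hKconv hK hKL
  have hu : 0 < u := by simpa using hfL 0 L.zero_mem
  -- a functional bounded above on a subspace vanishes on it
  have hfL0 : ∀ x ∈ L, f x = 0 := fun x hx => by
    by_contra hfx
    have := hfL ((u / f x) • x) (L.smul_mem _ hx)
    rw [map_smul, smul_eq_mul, div_mul_cancel₀ _ hfx] at this
    exact this.false
  exact ⟨f, hfL0, fun x hx => (hu.trans huv).trans (hfK x hx)⟩

namespace Matrix

instance {𝕜 E m n : Type*} [Semiring 𝕜] [PartialOrder 𝕜] [AddCommMonoid E] [TopologicalSpace E]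
    [Module 𝕜 E] [LocallyConvexSpace 𝕜 E] : LocallyConvexSpace 𝕜 (Matrix m n E) :=
  inferInstanceAs (LocallyConvexSpace 𝕜 (m → n → E))

variable {n : Type*} [Fintype n]

open scoped ComplexOrder MatrixOrder in
theorem PosSemidef.trace_mul_pos_of_posDef {𝕜 : Type*} [RCLike 𝕜] {A B : Matrix n n 𝕜}
    (hA : A.PosSemidef) (hB : B.PosDef) (hA0 : A ≠ 0) : 0 < (A * B).trace := by
  classical
  set S := CFC.sqrt A
  have hSH : Sᴴ = S := (CFC.sqrt_nonneg A).isSelfAdjoint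
  have hSS : S * S = A := CFC.sqrt_mul_sqrt_self A hA.nonneg
  have hSBS : (Sᴴ * B * S).PosSemidef := hB.posSemidef.conjTranspose_mul_mul_same S
  have htr : (A * B).trace = (Sᴴ * B * S).trace := by
    rw [hSH, ← hSS, mul_assoc, trace_mul_cycle, mul_assoc]
  rw [htr]
  refine hSBS.trace_nonneg.lt_of_ne' fun h0 => hA0 ?_
  rw [hSBS.trace_eq_zero_iff] at h0
  have hS0 : S = 0 := ext_iff_mulVec.mpr fun y => by
    rw [zero_mulVec]
    by_contra hy
    have := hB.dotProduct_mulVec_pos hy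
    rw [star_mulVec, dotProduct_mulVec, vecMul_vecMul, ← dotProduct_mulVec, mulVec_mulVec, h0,
      zero_mulVec, dotProduct_zero] at this
    exact this.false
  rw [← hSS, hS0, zero_mul]

theorem exists_trace_mul_eq {R : Type*} [CommSemiring R] (f : Matrix n n R →ₗ[R] R) :
    ∃ B : Matrix n n R, ∀ A, (A * B).trace = f A := by
  classical
  refine ⟨of fun j i => f (single i j 1), fun A => ?_⟩
  change (traceLinearMap n R R ∘ₗ LinearMap.mulRight R _) A = f A
  congr 1
  refine ext_linearMap R fun i j => ?_
  ext
  simp [trace_single_mul]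

theorem exists_isSymm_trace_mul_eq {R : Type*} [Field R] [NeZero (2 : R)]
    (f : Matrix n n R →ₗ[R] R) :
    ∃ B : Matrix n n R, B.IsSymm ∧ ∀ A, A.IsSymm → (A * B).trace = f A := by
  obtain ⟨B, hB⟩ := exists_trace_mul_eq f
  refine ⟨(2⁻¹ : R) • (B + Bᵀ), ?_, fun A hA => ?_⟩
  · simp [IsSymm, transpose_smul, transpose_add, add_comm]
  · have hBt : (A * Bᵀ).trace = (A * B).trace := by
      rw [← trace_transpose, transpose_mul, transpose_transpose, hA.eq, trace_mul_comm]
    rw [Matrix.mul_smul, mul_add, trace_smul, trace_add, hBt, hB, smul_eq_mul, ← two_mul,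
      inv_mul_cancel_left₀ two_ne_zero]

open scoped ComplexOrder in
theorem isClosed_setOf_posSemidef {𝕜 : Type*} [RCLike 𝕜] :
    IsClosed {A : Matrix n n 𝕜 | A.PosSemidef} := by
  simp only [posSemidef_iff_dotProduct_mulVec, Set.ofPred_and, Set.ofPred_forall]
  refine .inter (isClosed_eq (by fun_prop) continuous_id) (isClosed_iInter fun x => ?_)
  exact isClosed_le continuous_const (by fun_prop)

theorem PosSemidef.abs_apply_le_trace {A : Matrix n n ℝ} (hA : A.PosSemidef) (i j : n) :
    |A i j| ≤ A.trace := by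
  classical
  have hdiag (k : n) : A k k ≤ A.trace :=
    Finset.single_le_sum (f := fun l => A l l) (fun l _ => hA.diag_nonneg) (Finset.mem_univ k)
  have hquad (s : ℝ) : 0 ≤ A i i + 2 * s * A i j + s ^ 2 * A j j := by
    have := hA.dotProduct_mulVec_nonneg (Pi.single i 1 + s • Pi.single j 1)
    simp only [star_trivial, mulVec_add, mulVec_smul, mulVec_single, MulOpposite.op_one,
      one_smul, dotProduct_add, add_dotProduct, single_dotProduct, col_apply, one_mul,
      smul_dotProduct, dotProduct_smul, smul_eq_mul] at this
    have hsymm : A j i = A i j := by simpa using hA.isHermitian.apply i j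
    rw [hsymm] at this
    linear_combination this
  rw [abs_le]
  constructor <;> linarith [hquad 1, hquad (-1), hdiag i, hdiag j]

variable (n) in
def spectraplex : Set (Matrix n n ℝ) := {A | A.PosSemidef ∧ A.trace = 1}

theorem convex_spectraplex : Convex ℝ (spectraplex n) :=
  fun _ hA _ hB _ _ ha hb hab =>
    ⟨(hA.1.smul ha).add (hB.1.smul hb), by simp [trace_add, trace_smul, hA.2, hB.2, hab]⟩

theorem isCompact_spectraplex : IsCompact (spectraplex n) := by
  have hbox : IsCompact (Set.univ.pi fun _ : n => Set.univ.pi fun _ : n => Set.Icc (-1 : ℝ) 1) :=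
    isCompact_univ_pi fun _ => isCompact_univ_pi fun _ => isCompact_Icc
  refine hbox.of_isClosed_subset ?_ fun A hA i _ j _ => ?_
  · exact isClosed_setOf_posSemidef.inter (isClosed_eq (by fun_prop) continuous_const)
  · exact abs_le.mp (hA.2 ▸ hA.1.abs_apply_le_trace i j)

theorem PosSemidef.map_pos_of_forall_mem_spectraplex {A : Matrix n n ℝ} (hA : A.PosSemidef)
    (hA0 : A ≠ 0) (f : Matrix n n ℝ →ₗ[ℝ] ℝ) (hf : ∀ X ∈ spectraplex n, 0 < f X) : 0 < f A := by
  have ht : 0 < A.trace := hA.trace_nonneg.lt_of_ne' (mt hA.trace_eq_zero_iff.mp hA0)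
  have hX : A.trace⁻¹ • A ∈ spectraplex n :=
    ⟨hA.smul (inv_nonneg.2 ht.le), by rw [trace_smul, smul_eq_mul, inv_mul_cancel₀ ht.ne']⟩
  have := hf _ hX
  rw [map_smul, smul_eq_mul] at this
  exact (mul_pos_iff_of_pos_left (inv_pos.2 ht)).1 this

theorem trace_vecMulVec_mul {R : Type*} [CommSemiring R] (a b : n → R) (B : Matrix n n R) :
    (vecMulVec a b * B).trace = b ⬝ᵥ B *ᵥ a := by
  simp only [trace, diag_apply, mul_apply, vecMulVec_apply, dotProduct, mulVec, Finset.mul_sum]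
  rw [Finset.sum_comm]
  exact Finset.sum_congr rfl fun _ _ => Finset.sum_congr rfl fun _ _ => by ring

theorem posDef_of_trace_mul_pos {B : Matrix n n ℝ} (hB : B.IsSymm)
    (h : ∀ A : Matrix n n ℝ, A.PosSemidef → A ≠ 0 → 0 < (A * B).trace) : B.PosDef := by
  refine .of_dotProduct_mulVec_pos (isHermitian_iff_isSymm.2 hB) fun x hx => ?_
  have hx0 : vecMulVec x x ≠ 0 := fun h0 => hx <| dotProduct_self_eq_zero.1 <| by
    rw [← trace_vecMulVec, h0, trace_zero]
  have := h _ (by simpa using posSemidef_vecMulVec_self_star x) hx0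
  rwa [trace_vecMulVec_mul, ← star_trivial x] at this

end Matrix

/-- Gordan–Stiemke type alternative: for a linear subspace `L` of real symmetric
`n × n` matrices, exactly one of the following holds:
(1) `L` contains a nonzero positive semidefinite matrix;
(2) the orthogonal complement of `L` (w.r.t. the trace inner product, within
symmetric matrices) contains a positive definite matrix. -/
theorem psd_subspace_alternative (n : ℕ)
    (L : Submodule ℝ (Matrix (Fin n) (Fin n) ℝ))
    (hL : ∀ A ∈ L, A.IsSymm) :
    Xor'
      (∃ A ∈ L, A ≠ 0 ∧ A.PosSemidef)
      (∃ B : Matrix (Fin n) (Fin n) ℝ, B.IsSymm ∧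
        (∀ A ∈ L, (A * B).trace = 0) ∧ B.PosDef) := by
  by_cases h : ∃ A ∈ L, A ≠ 0 ∧ A.PosSemidef
  · refine Or.inl ⟨h, ?_⟩
    rintro ⟨B, -, hBL, hB⟩
    obtain ⟨A, hAL, hA0, hA⟩ := h
    exact (hA.trace_mul_pos_of_posDef hB hA0).ne' (hBL A hAL)
  refine Or.inr ⟨?_, h⟩
  have hdisj : Disjoint (L : Set (Matrix (Fin n) (Fin n) ℝ)) (Matrix.spectraplex (Fin n)) :=
    Set.disjoint_left.2 fun A hAL hA =>
      h ⟨A, hAL, fun h0 => by simpa [h0] using hA.2, hA.1⟩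
  obtain ⟨f, hfL, hf⟩ := L.exists_strongDual_eq_zero_pos_of_disjoint
    L.closed_of_finiteDimensional Matrix.convex_spectraplex Matrix.isCompact_spectraplex hdisj
  obtain ⟨B, hB, hBf⟩ :=
    Matrix.exists_isSymm_trace_mul_eq (f : Matrix (Fin n) (Fin n) ℝ →ₗ[ℝ] ℝ)
  refine ⟨B, hB, fun A hA => (hBf A (hL A hA)).trans (hfL A hA),
    Matrix.posDef_of_trace_mul_pos hB fun A hA hA0 => ?_⟩
  rw [hBf A (Matrix.isHermitian_iff_isSymm.1 hA.isHermitian)]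
  exact hA.map_pos_of_forall_mem_spectraplex hA0 _ hf
end

section
/- Any sequence defined by the recursion α_{j+1} = 2 - 1/(α_{j+2} α_{j+3} ··· α_{t_{j+1}}) with α_k = 2, where each tail index t_{j+1} satisfies j+1 < t_{j+1} ≤ k (the empty product being 1 when t_{j+1} = j+1 does not occur), satisfies 1 < α_{j+1} ≤ 2 for all j = 1, ..., k-1. -/
/-!
Downward induction from `α k = 2`: every factor of the tail product `α (j+2) ⋯ α (t (j+1))`
exceeds `1`, so the product exceeds `1` and `2 - 1 / ∏` lies strictly between `1` and `2`.
-/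

theorem Finset.one_lt_prod_of_one_lt {ι R : Type*} [CommMonoidWithZero R] [PartialOrder R]
    [ZeroLEOneClass R] [PosMulStrictMono R] [Nontrivial R] {f : ι → R} {s : Finset ι}
    (h : ∀ i ∈ s, 1 < f i) (hs : s.Nonempty) : 1 < ∏ i ∈ s, f i := by
  simpa using Finset.prod_lt_prod_of_nonempty (f := 1) (fun _ _ ↦ zero_lt_one) h hs

theorem two_sub_one_div_mem_Ioc {K : Type*} [Field K] [LinearOrder K] [IsStrictOrderedRing K]
    {x : K} (hx : 1 < x) : 2 - 1 / x ∈ Set.Ioc 1 2 := by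
  have hpos : 0 < 1 / x := by positivity
  have hlt : 1 / x < 1 := (div_lt_one (by positivity)).2 hx
  constructor <;> linarith

theorem alpha_in_one_two_general (k : ℕ) (t : ℕ → ℕ) (α : ℕ → ℝ)
    (ht : ∀ j, 1 ≤ j → j ≤ k - 2 → j + 2 ≤ t (j + 1) ∧ t (j + 1) ≤ k + 1)
    (hbase : α k = 2)
    (hrec : ∀ j, 1 ≤ j → j ≤ k - 2 →
      (t (j + 1) = k + 1 → α (j + 1) = 2) ∧
      (t (j + 1) ≤ k →
        α (j + 1) = 2 - 1 / (∏ i ∈ Finset.Icc (j + 2) (t (j + 1)), α i))) :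
    ∀ j, 1 ≤ j → j ≤ k - 1 → 1 < α (j + 1) ∧ α (j + 1) ≤ 2 := by
  suffices h : ∀ i, i ∈ Set.Icc 2 k → α i ∈ Set.Ioc 1 2 from
    fun j h1 h2 ↦ h (j + 1) ⟨by omega, by omega⟩
  refine Nat.strong_decreasing_induction ⟨k, fun m hm hmk ↦ absurd hmk.2 (by omega)⟩ ?_
  rintro i ih ⟨hi2, hik⟩
  obtain rfl | hik := hik.eq_or_lt
  · norm_num [hbase]
  obtain ⟨j, rfl⟩ : ∃ j, i = j + 1 := ⟨i - 1, by omega⟩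
  obtain ⟨hlo, hhi⟩ := ht j (by omega) (by omega)
  obtain ⟨hstop, hcont⟩ := hrec j (by omega) (by omega)
  rcases hhi.eq_or_lt with htop | htk
  · norm_num [hstop htop]
  · rw [hcont (by omega)]
    have htail : ∀ m ∈ Finset.Icc (j + 2) (t (j + 1)), 1 < α m := fun m hm ↦
      have hm := Finset.mem_Icc.1 hm
      (ih m (by omega) ⟨by omega, by omega⟩).1
    exact two_sub_one_div_mem_Ioc
      (Finset.one_lt_prod_of_one_lt htail ⟨j + 2, Finset.mem_Icc.2 ⟨le_rfl, hlo⟩⟩)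

/-- Any sequence defined by the recursion
`α (j+1) = 2 - 1 / (α (j+2) ⋯ α (t (j+1)))` (and `α (j+1) = 2` when
`t (j+1) = k+1`), with `α k = 2` and tail indices `j+2 ≤ t (j+1) ≤ k+1`,
satisfies `1 < α (j+1) ≤ 2` for all `j = 1, …, k-1`. -/
theorem alpha_in_one_two (k : ℕ) (hk : 2 ≤ k) (t : ℕ → ℕ) (α : ℕ → ℝ)
    (ht : ∀ j, 1 ≤ j → j ≤ k - 2 → j + 2 ≤ t (j + 1) ∧ t (j + 1) ≤ k + 1)
    (hbase : α k = 2)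
    (hrec : ∀ j, 1 ≤ j → j ≤ k - 2 →
      (t (j + 1) = k + 1 → α (j + 1) = 2) ∧
      (t (j + 1) ≤ k →
        α (j + 1) = 2 - 1 / (∏ i ∈ Finset.Icc (j + 2) (t (j + 1)), α i))) :
    ∀ j, 1 ≤ j → j ≤ k - 1 → 1 < α (j + 1) ∧ α (j + 1) ≤ 2 :=
  alpha_in_one_two_general k t α ht hbase hrec
end

section
/- Suppose x_1, x_2, x_3 are real numbers with x_3 ≥ 10 satisfying x_1 - 2x_2 ≥ (x_2 - x_3)^2 and x_2 + x_3 ≥ x_3^2. Then x_2 ≥ (1/2) x_3^2 and x_1 ≥ (1/2) x_2^2. -/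
/-!
The first bound is `x₂ ≥ x₃² - x₃ ≥ x₃² / 2`, valid once `x₃ ≥ 2`. For the second, the identity
`2y + (y - t)² - y² / 2 = (y - 2t)² / 2 + (2y - t²)` shows `x₁ ≥ 2x₂ + (x₂ - x₃)² ≥ x₂² / 2`
as soon as `x₃² ≤ 2x₂`, which is the first bound.
-/

theorem half_mul_sq_le_of_sq_le_add_self {t y : ℝ} (ht : 2 ≤ t) (h : t ^ 2 ≤ y + t) :
    1 / 2 * t ^ 2 ≤ y := by
  nlinarith

theorem half_mul_sq_le_of_sq_sub_le {t x y : ℝ} (hty : t ^ 2 ≤ 2 * y)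
    (h : (y - t) ^ 2 ≤ x - 2 * y) : 1 / 2 * y ^ 2 ≤ x := by
  linarith [sq_nonneg (y - 2 * t)]

/-- Perturbed Khachiyan: if `x₃ ≥ 10`, `x₁ - 2x₂ ≥ (x₂ - x₃)²` and
`x₂ + x₃ ≥ x₃²`, then `x₂ ≥ x₃²/2` and `x₁ ≥ x₂²/2`. -/
theorem perturbed_khachiyan (x₁ x₂ x₃ : ℝ) (h₃ : x₃ ≥ 10)
    (h1 : x₁ - 2 * x₂ ≥ (x₂ - x₃) ^ 2)
    (h2 : x₂ + x₃ ≥ x₃ ^ 2) :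
    x₂ ≥ (1 / 2) * x₃ ^ 2 ∧ x₁ ≥ (1 / 2) * x₂ ^ 2 := by
  have hx₂ : 1 / 2 * x₃ ^ 2 ≤ x₂ := half_mul_sq_le_of_sq_le_add_self (by linarith) h2
  exact ⟨hx₂, half_mul_sq_le_of_sq_sub_le (by linarith) h1⟩
end

section
/- If positive reals x_1, ..., x_k satisfy x_j x_{j+2} ≥ x_{j+1}^2 for j = 1, ..., k-2 and x_{k-1} ≥ x_k^2, then x_j ≥ x_{j+1}^{1 + 1/(k-j)} for all j = 1, ..., k-1, provided x_k ≥ 1. -/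
/-!
Read from the tail, the chain is a log-convexity condition. If `x_{j+1} ≥ x_{j+2}^{1+1/m}`,
i.e. `x_{j+2} ≤ x_{j+1}^{m/(m+1)}`, then
`x_j ≥ x_{j+1}^2 / x_{j+2} ≥ x_{j+1}^{2 - m/(m+1)} = x_{j+1}^{1+1/(m+1)}`.
Starting from `x_{k-1} ≥ x_k^2` (the case `m = 1`), downward induction on `j` gives the claim with
`m + 1 = k - j`.
-/

open Real

theorem rpow_one_add_inv_add_one_le_of_sq_le_mul {a b c m : ℝ} (hc : 0 < c) (hm : 0 < m)
    (hconv : b ^ 2 ≤ a * c) (htail : c ^ (1 + 1 / m) ≤ b) :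
    b ^ (1 + 1 / (m + 1)) ≤ a := by
  have hb : 0 < b := (rpow_pos_of_pos hc _).trans_le htail
  have hexp : (0 : ℝ) < 1 + 1 / m := by positivity
  have hc_le : c ≤ b ^ (1 + 1 / m)⁻¹ := (le_rpow_inv_iff_of_pos hc.le hb.le hexp).2 htail
  calc b ^ (1 + 1 / (m + 1)) = b ^ 2 / b ^ (1 + 1 / m)⁻¹ := by
        rw [← rpow_natCast, ← rpow_sub hb]
        congr 1
        field_simp
        ring
    _ ≤ b ^ 2 / c := by gcongr
    _ ≤ a := (div_le_iff₀ hc).2 hconv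

theorem minimal_tail_index_chain_general (k : ℕ) (x : ℕ → ℝ)
    (hpos : ∀ j, 1 ≤ j → j ≤ k → 0 < x j)
    (hchain : ∀ j, 1 ≤ j → j ≤ k - 2 → x j * x (j + 2) ≥ (x (j + 1)) ^ 2)
    (hlast : x (k - 1) ≥ (x k) ^ 2) :
    ∀ j, 1 ≤ j → j ≤ k - 1 →
      x j ≥ (x (j + 1)) ^ ((1 : ℝ) + 1 / ((k : ℝ) - (j : ℝ))) := by
  intro j hj hjk
  refine Nat.decreasingInduction' (fun i hi hji ih => ?_) hjk ?_
  · have hk : (k : ℝ) - (i : ℝ) = ((k : ℝ) - ((i + 1 : ℕ) : ℝ)) + 1 := by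
      push_cast
      ring
    have hm : (0 : ℝ) < (k : ℝ) - ((i + 1 : ℕ) : ℝ) := by
      rw [sub_pos]
      exact_mod_cast (by omega : i + 1 < k)
    rw [hk]
    exact rpow_one_add_inv_add_one_le_of_sq_le_mul (hpos _ (by omega) (by omega)) hm
      (by linarith [hchain i (by omega) (by omega)]) ih
  · have hk : (k : ℝ) - ((k - 1 : ℕ) : ℝ) = 1 := by
      rw [Nat.cast_sub (by omega)]
      ring
    rw [hk, Nat.sub_add_cancel (by omega), show (1 : ℝ) + 1 / 1 = (2 : ℕ) by norm_num,
      rpow_natCast]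
    exact hlast

/-- Minimal tail-index chain: if positive reals satisfy
`x j * x (j+2) ≥ x (j+1)²` for `j = 1, …, k-2` and `x (k-1) ≥ (x k)²` with
`x k ≥ 1`, then `x j ≥ x (j+1) ^ (1 + 1/(k-j))` for all `j = 1, …, k-1`. -/
theorem minimal_tail_index_chain (k : ℕ) (hk : 2 ≤ k) (x : ℕ → ℝ)
    (hpos : ∀ j, 1 ≤ j → j ≤ k → 0 < x j)
    (hxk : x k ≥ 1)
    (hchain : ∀ j, 1 ≤ j → j ≤ k - 2 → x j * x (j + 2) ≥ (x (j + 1)) ^ 2)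
    (hlast : x (k - 1) ≥ (x k) ^ 2) :
    ∀ j, 1 ≤ j → j ≤ k - 1 →
      x j ≥ (x (j + 1)) ^ ((1 : ℝ) + 1 / ((k : ℝ) - (j : ℝ))) :=
  minimal_tail_index_chain_general k x hpos hchain hlast
end

section
/- Let y ∈ ℝ^{2n} be such that the (n+1)×(n+1) Hankel moment matrix H with H_{ij} = y_{i+j-2} (where y_0 := 1, indices i,j from 1 to n+1) is positive semidefinite. Then y_{2(n-j+1)} ≥ y_{2(n-j)}^{1 + 1/(n-j)} for j = 1, ..., n-1, provided y_2 ≥ 1; in particular y_{2n} ≥ y_2^n. -/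
/-!
The even moments `a k = y (2 * k)` form a nonnegative log-convex sequence: `a (k + 1) ^ 2 ≤
a k * a (k + 2)` is the `2 × 2` principal minor of `H` on the indices `k, k + 2`. Since `a 0 = 1`,
log-convexity makes `a k ^ (1 / k)` nondecreasing, i.e. `a k ^ (k + 1) ≤ a (k + 1) ^ k`, which
gives both claims.
-/

open Matrix

lemma Matrix.PosSemidef.sq_apply_le {ι : Type*} [Fintype ι] {A : Matrix ι ι ℝ}
    (hA : A.PosSemidef) (i j : ι) : A i j ^ 2 ≤ A i i * A j j := by
  classical
  have hdet := (hA.submatrix ![i, j]).det_nonneg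
  rw [det_fin_two] at hdet
  simp only [submatrix_apply, Matrix.cons_val_zero, Matrix.cons_val_one] at hdet
  have hsymm : A j i = A i j := by simpa using hA.isHermitian.apply i j
  rw [hsymm, ← sq] at hdet
  linarith

section LogConvex

variable {a : ℕ → ℝ} {N : ℕ}

lemma pow_succ_le_pow_of_sq_le_mul (hnn : ∀ k ≤ N, 0 ≤ a k)
    (hlc : ∀ k, k + 2 ≤ N → a (k + 1) ^ 2 ≤ a k * a (k + 2)) (h0 : a 0 ≤ 1) :
    ∀ k < N, a k ^ (k + 1) ≤ a (k + 1) ^ k := by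
  intro k hk
  induction k with
  | zero => simpa using h0
  | succ k ih =>
    have hk0 := hnn k (by omega)
    have hk1 := hnn (k + 1) (by omega)
    have hk2 := hnn (k + 2) (by omega)
    rcases hk1.eq_or_lt with hzero | hpos
    · rw [← hzero, zero_pow (by omega)]
      positivity
    refine le_of_mul_le_mul_right ?_ (pow_pos hpos k)
    calc a (k + 1) ^ (k + 2) * a (k + 1) ^ k = (a (k + 1) ^ 2) ^ (k + 1) := by ring
      _ ≤ (a k * a (k + 2)) ^ (k + 1) := pow_le_pow_left₀ (by positivity) (hlc k hk) _
      _ = a k ^ (k + 1) * a (k + 2) ^ (k + 1) := mul_pow _ _ _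
      _ ≤ a (k + 1) ^ k * a (k + 2) ^ (k + 1) := by gcongr; exact ih (by omega)
      _ = a (k + 2) ^ (k + 1) * a (k + 1) ^ k := mul_comm _ _

lemma pow_le_of_sq_le_mul (hnn : ∀ k ≤ N, 0 ≤ a k)
    (hlc : ∀ k, k + 2 ≤ N → a (k + 1) ^ 2 ≤ a k * a (k + 2)) (h0 : a 0 = 1) :
    ∀ k ≤ N, a 1 ^ k ≤ a k := by
  intro k hk
  induction k with
  | zero => simp [h0]
  | succ k ih =>
    rcases Nat.eq_zero_or_pos k with rfl | hkpos
    · simp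
    have ha1 : 0 ≤ a 1 := hnn 1 (by omega)
    refine (pow_le_pow_iff_left₀ (by positivity) (hnn _ hk) hkpos.ne').mp ?_
    calc (a 1 ^ (k + 1)) ^ k = (a 1 ^ k) ^ (k + 1) := by ring
      _ ≤ a k ^ (k + 1) := pow_le_pow_left₀ (by positivity) (ih (by omega)) _
      _ ≤ a (k + 1) ^ k := pow_succ_le_pow_of_sq_le_mul hnn hlc h0.le k hk

end LogConvex

lemma Real.rpow_one_add_inv_le_of_pow_succ_le {x y : ℝ} {k : ℕ} (hx : 0 ≤ x) (hy : 0 ≤ y)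
    (hk : k ≠ 0) (h : x ^ (k + 1) ≤ y ^ k) : x ^ (1 + 1 / (k : ℝ)) ≤ y := by
  have hexp : (1 + 1 / (k : ℝ)) = ((k + 1 : ℕ) : ℝ) * (k : ℝ)⁻¹ := by
    push_cast; field_simp
  calc x ^ (1 + 1 / (k : ℝ)) = (x ^ (k + 1)) ^ (k : ℝ)⁻¹ := by
        rw [hexp, Real.rpow_natCast_mul hx]
    _ ≤ (y ^ k) ^ (k : ℝ)⁻¹ := Real.rpow_le_rpow (by positivity) h (by positivity)
    _ = y := Real.pow_rpow_inv_natCast hy hk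

theorem hankel_large_solutions_general (n : ℕ) (y : ℕ → ℝ)
    (hy0 : y 0 = 1)
    (H : Matrix (Fin (n + 1)) (Fin (n + 1)) ℝ)
    (hH : ∀ i j : Fin (n + 1), H i j = y ((i : ℕ) + (j : ℕ)))
    (hpsd : H.PosSemidef) :
    (∀ j, 1 ≤ j → j ≤ n - 1 →
      y (2 * (n - j + 1)) ≥
        (y (2 * (n - j))) ^ ((1 : ℝ) + 1 / ((n : ℝ) - (j : ℝ)))) ∧
    y (2 * n) ≥ (y 2) ^ (n : ℝ) := by
  set a : ℕ → ℝ := fun k ↦ y (2 * k) with ha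
  have hnn : ∀ k ≤ n, 0 ≤ a k := fun k hk ↦ by
    simpa [ha, hH, two_mul] using hpsd.diag_nonneg (i := ⟨k, by omega⟩)
  have hlc : ∀ k, k + 2 ≤ n → a (k + 1) ^ 2 ≤ a k * a (k + 2) := fun k hk ↦ by
    have h := hpsd.sq_apply_le ⟨k, by omega⟩ ⟨k + 2, by omega⟩
    simp only [hH] at h
    convert h using 4 <;> omega
  have h0 : a 0 = 1 := by simpa [ha] using hy0
  refine ⟨fun j hj1 hjn ↦ ?_, ?_⟩
  · rw [← Nat.cast_sub (by omega)]
    exact Real.rpow_one_add_inv_le_of_pow_succ_le (hnn _ (by omega)) (hnn _ (by omega))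
      (by omega) (pow_succ_le_pow_of_sq_le_mul hnn hlc h0.le _ (by omega))
  · rw [Real.rpow_natCast]
    exact pow_le_of_sq_le_mul hnn hlc h0 n le_rfl

/-- If the `(n+1) × (n+1)` Hankel moment matrix `H i j = y (i+j)` (with
`y 0 := 1`) is positive semidefinite and `y 2 ≥ 1`, then
`y (2(n-j+1)) ≥ y (2(n-j)) ^ (1 + 1/(n-j))` for `j = 1, …, n-1`; in
particular `y (2n) ≥ (y 2)^n`. -/
theorem hankel_large_solutions (n : ℕ) (hn : 2 ≤ n) (y : ℕ → ℝ)
    (hy0 : y 0 = 1) (hy2 : y 2 ≥ 1)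
    (H : Matrix (Fin (n + 1)) (Fin (n + 1)) ℝ)
    (hH : ∀ i j : Fin (n + 1), H i j = y ((i : ℕ) + (j : ℕ)))
    (hpsd : H.PosSemidef) :
    (∀ j, 1 ≤ j → j ≤ n - 1 →
      y (2 * (n - j + 1)) ≥
        (y (2 * (n - j))) ^ ((1 : ℝ) + 1 / ((n : ℝ) - (j : ℝ)))) ∧
    y (2 * n) ≥ (y 2) ^ (n : ℝ) :=
  hankel_large_solutions_general n y hy0 H hH hpsd
end

section
/- Let Z ∈ Sym(n) and suppose Z restricted to the index set I (its principal submatrix Z(I)) is positive definite, and let A ∈ Sym(n) be a matrix whose principal submatrix A(J) on an index set J ⊇ I equals the identity on J∖I and zero interaction outside: specifically A(J∖I, J∖I) = Identity, A(J∖I, I) = 0, A restricted outside J arbitrary only in rows/columns of J∖I within J. Then for all sufficiently large x > 0, the principal submatrix (xA + Z)(J) is positive definite. -/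
/-!
By the Schur complement with respect to the positive definite block `Z₂₂`, the block matrix is
positive definite iff `x • 1 + (Z₁₁ - Z₁₂ Z₂₂⁻¹ Z₁₂ᵀ)` is. Adding `x • 1` to a Hermitian matrix
shifts its finite real spectrum by `x`, which makes it positive once `x` exceeds minus the
smallest eigenvalue.
-/

open Matrix Filter
open scoped ComplexOrder

namespace Matrix

variable {𝕜 m n : Type*} [RCLike 𝕜] [Fintype m] [Fintype n] [DecidableEq m] [DecidableEq n]

theorem PosDef.posDef_fromBlocks₂₂_iff (A : Matrix m m 𝕜) (B : Matrix m n 𝕜) {D : Matrix n n 𝕜}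
    (hD : D.PosDef) :
    (fromBlocks A B Bᴴ D).PosDef ↔ (A - B * D⁻¹ * Bᴴ).PosDef := by
  have := hD.isUnit.invertible
  have hdet : (fromBlocks A B Bᴴ D).det = D.det * (A - B * D⁻¹ * Bᴴ).det := by
    rw [det_fromBlocks₂₂, invOf_eq_nonsing_inv]
  constructor
  · intro h
    rw [((hD.fromBlocks₂₂ A B).mp h.posSemidef).posDef_iff_det_ne_zero]
    exact right_ne_zero_of_mul (hdet ▸ h.det_pos.ne')
  · intro hS
    rw [((hD.fromBlocks₂₂ A B).mpr hS.posSemidef).posDef_iff_det_ne_zero, hdet]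
    exact mul_ne_zero hD.det_pos.ne' hS.det_pos.ne'

theorem IsHermitian.posDef_of_spectrum_pos {A : Matrix n n 𝕜} (hA : A.IsHermitian)
    (h : ∀ a ∈ spectrum ℝ A, 0 < a) : A.PosDef :=
  hA.posDef_iff_eigenvalues_pos.mpr fun i ↦ h _ (hA.eigenvalues_mem_spectrum_real i)

theorem IsHermitian.eventually_posDef_smul_one_add {A : Matrix n n 𝕜} (hA : A.IsHermitian) :
    ∀ᶠ x : ℝ in atTop, (x • (1 : Matrix n n 𝕜) + A).PosDef := by
  obtain ⟨c, hc⟩ := A.finite_real_spectrum.bddBelow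
  filter_upwards [eventually_gt_atTop (-c)] with x hx
  have hherm : (x • (1 : Matrix n n 𝕜) + A).IsHermitian :=
    (isHermitian_one.smul (IsSelfAdjoint.all x)).add hA
  refine hherm.posDef_of_spectrum_pos fun a ha ↦ ?_
  rw [← Algebra.algebraMap_eq_smul_one, ← spectrum.singleton_add_eq] at ha
  obtain ⟨_, rfl, b, hb, rfl⟩ := ha
  linarith [hc hb]

theorem PosDef.eventually_posDef_fromBlocks_smul_one_add {A : Matrix m m 𝕜} (hA : A.IsHermitian)
    (B : Matrix m n 𝕜) {D : Matrix n n 𝕜} (hD : D.PosDef) :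
    ∀ᶠ x : ℝ in atTop, (fromBlocks (x • 1 + A) B Bᴴ D).PosDef := by
  have hS : (A - B * D⁻¹ * Bᴴ).IsHermitian :=
    hA.sub (isHermitian_mul_mul_conjTranspose B hD.isHermitian.inv)
  filter_upwards [hS.eventually_posDef_smul_one_add] with x hx
  rwa [hD.posDef_fromBlocks₂₂_iff, add_sub_assoc]

end Matrix

/-- Key step making `x_k` arbitrarily large: if `A` has identity block on `I₁`,
zeros elsewhere (in particular `A(I₂, I₁) = 0` and `A(I₂) = 0`), and `Z` is
symmetric with `Z(I₂)` positive definite, then `x • A + Z` is positive definite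
for all sufficiently large `x > 0`. -/
theorem large_x_posdef (p r : ℕ)
    (Z₁₁ : Matrix (Fin p) (Fin p) ℝ) (Z₁₂ : Matrix (Fin p) (Fin r) ℝ)
    (Z₂₂ : Matrix (Fin r) (Fin r) ℝ)
    (hZ₁₁ : Z₁₁.IsSymm) (hZ₂₂ : Z₂₂.PosDef) :
    ∃ T : ℝ, 0 < T ∧ ∀ x : ℝ, T ≤ x →
      (x • fromBlocks (1 : Matrix (Fin p) (Fin p) ℝ) 0 0 0 +
        fromBlocks Z₁₁ Z₁₂ Z₁₂ᵀ Z₂₂).PosDef := by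
  have hblocks (x : ℝ) : x • fromBlocks (1 : Matrix (Fin p) (Fin p) ℝ) 0 0 0 +
      fromBlocks Z₁₁ Z₁₂ Z₁₂ᵀ Z₂₂ = fromBlocks (x • 1 + Z₁₁) Z₁₂ Z₁₂ᴴ Z₂₂ := by
    simp [fromBlocks_smul, fromBlocks_add]
  have hlarge := (hZ₂₂.eventually_posDef_fromBlocks_smul_one_add
    (isHermitian_iff_isSymm.mpr hZ₁₁) Z₁₂).and (eventually_gt_atTop 0)
  obtain ⟨T, hT⟩ := hlarge.exists_forall_of_atTop
  exact ⟨T, (hT T le_rfl).2, fun x hx ↦ hblocks x ▸ (hT x hx).1⟩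
end

section
/- Let α_2, ..., α_k be defined by the recursion α_{j+1} = 2 - 1/(α_{j+2}···α_{t_{j+1}}) if t_{j+1} ≤ k and α_{j+1} = 2 if t_{j+1} = k+1, with tail indices satisfying j+1 < t_{j+1} ≤ k+1. If one tail index t_{j+1} ≤ k is increased by 1 (all others fixed), then the new exponent ω_{j+1} is strictly larger than α_{j+1}, exponents with larger index are unchanged, and exponents with smaller index do not decrease. -/
/-- `α` satisfies the tail-index recursion for tail indices `t`:
`α k = 2`, and for `j = 1, …, k-2`, `α (j+1) = 2` if `t (j+1) = k+1` and
`α (j+1) = 2 - 1/(α (j+2) ⋯ α (t (j+1)))` if `t (j+1) ≤ k`. -/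
def SatisfiesTailRecursion (k : ℕ) (t : ℕ → ℕ) (α : ℕ → ℝ) : Prop :=
  α k = 2 ∧ ∀ j, 1 ≤ j → j ≤ k - 2 →
    (t (j + 1) = k + 1 → α (j + 1) = 2) ∧
    (t (j + 1) ≤ k →
      α (j + 1) = 2 - 1 / (∏ i ∈ Finset.Icc (j + 2) (t (j + 1)), α i))

/-!
Each exponent is `2 - 1/P` with `P` a product of later exponents, all of which exceed `1`, so it
grows with `P`; and `P` grows both with its factors and with the length of its range, i.e. with the
tail index. A downward induction therefore shows that the exponents depend monotonically on the
tail indices, and strictly at an index whose own tail index grows, because the new factor exceeds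
`1`. Above `j₀ + 1` the tail indices agree, so monotonicity in both directions gives equality
there.
-/

open Finset

/-- `t i` is the tail index of the exponent `α i`; the last exponent `α k = 2` has none. -/
def TailIndicesAdmissible (k : ℕ) (t : ℕ → ℕ) : Prop :=
  ∀ i, 2 ≤ i → i < k → i < t i ∧ t i ≤ k + 1

theorem TailIndicesAdmissible.update_succ {k : ℕ} {t : ℕ → ℕ}
    (ht : TailIndicesAdmissible k t) {a : ℕ} (ha : t a ≤ k) :
    TailIndicesAdmissible k (Function.update t a (t a + 1)) := by
  intro i h2 hik
  rcases eq_or_ne i a with rfl | hia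
  · have := ht i h2 hik
    simp only [Function.update_self]
    omega
  · simpa only [Function.update_of_ne hia] using ht i h2 hik

theorem prod_Icc_le_prod_Icc {R : Type*} [CommSemiring R] [PartialOrder R] [IsOrderedRing R]
    {f g : ℕ → R} {a b c : ℕ} (hbc : b ≤ c)
    (hf : ∀ m ∈ Icc a b, 0 ≤ f m) (hfg : ∀ m ∈ Icc a b, f m ≤ g m)
    (hg : ∀ m ∈ Icc a c, 1 ≤ g m) : ∏ m ∈ Icc a b, f m ≤ ∏ m ∈ Icc a c, g m :=
  (prod_le_prod hf hfg).trans <| prod_le_prod_of_subset_of_one_le (Icc_subset_Icc_right hbc)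
    (fun m hm => zero_le_one.trans (hg m (Icc_subset_Icc_right hbc hm))) fun m hm _ => hg m hm

theorem prod_Icc_lt_prod_Icc {R : Type*} [CommSemiring R] [PartialOrder R] [IsStrictOrderedRing R]
    {f g : ℕ → R} {a b c : ℕ} (hab : a ≤ b + 1) (hbc : b < c)
    (hf : ∀ m ∈ Icc a b, 0 ≤ f m) (hfg : ∀ m ∈ Icc a b, f m ≤ g m)
    (hg : ∀ m ∈ Icc a c, 1 < g m) : ∏ m ∈ Icc a b, f m < ∏ m ∈ Icc a c, g m := by
  have hg' : ∀ m ∈ Icc a c, 1 ≤ g m := fun m hm => (hg m hm).le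
  have hsub : Icc a b ⊆ Icc a c := Icc_subset_Icc_right hbc.le
  calc ∏ m ∈ Icc a b, f m ≤ ∏ m ∈ Icc a b, g m :=
        prod_Icc_le_prod_Icc le_rfl hf hfg fun m hm => hg' m (hsub hm)
    _ < (∏ m ∈ Icc a b, g m) * g (b + 1) :=
        lt_mul_of_one_lt_right (prod_pos fun m hm => one_pos.trans (hg m (hsub hm)))
          (hg (b + 1) (mem_Icc.2 ⟨hab, hbc⟩))
    _ = ∏ m ∈ Icc a (b + 1), g m := (prod_Icc_succ_top hab g).symm
    _ ≤ ∏ m ∈ Icc a c, g m :=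
        prod_Icc_le_prod_Icc hbc
          (fun m hm => zero_le_one.trans (hg' m (Icc_subset_Icc_right hbc hm)))
          (fun _ _ => le_rfl) hg'

namespace SatisfiesTailRecursion

variable {k : ℕ} {t t' : ℕ → ℕ} {α ω : ℕ → ℝ}

theorem apply_of_tail_eq (hα : SatisfiesTailRecursion k t α) {i : ℕ} (h2 : 2 ≤ i)
    (hik : i < k) (hti : t i = k + 1) : α i = 2 := by
  obtain ⟨j, rfl⟩ : ∃ j, i = j + 1 := ⟨i - 1, by omega⟩
  exact (hα.2 j (by omega) (by omega)).1 hti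

theorem apply_of_tail_le (hα : SatisfiesTailRecursion k t α) {i : ℕ} (h2 : 2 ≤ i)
    (hik : i < k) (hti : t i ≤ k) : α i = 2 - 1 / ∏ m ∈ Icc (i + 1) (t i), α m := by
  obtain ⟨j, rfl⟩ : ∃ j, i = j + 1 := ⟨i - 1, by omega⟩
  exact (hα.2 j (by omega) (by omega)).2 hti

theorem one_lt (hα : SatisfiesTailRecursion k t α) (ht : TailIndicesAdmissible k t) :
    ∀ i, 2 ≤ i → i ≤ k → 1 < α i := by
  refine Nat.strong_decreasing_induction ⟨k, fun m hm _ hmk => absurd hmk (by omega)⟩ ?_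
  intro i ih h2 hik
  rcases hik.lt_or_eq with hik | rfl
  · rcases (ht i h2 hik).2.lt_or_eq with hti | hti
    · have hP : 1 < ∏ m ∈ Icc (i + 1) (t i), α m := by
        simpa using prod_lt_prod_of_nonempty (fun _ _ => one_pos)
          (fun m hm => ih m (by grind) (by grind) (by grind))
          (nonempty_Icc.2 (ht i h2 hik).1)
      have : 1 / ∏ m ∈ Icc (i + 1) (t i), α m < 1 := (div_lt_one (by linarith)).2 hP
      rw [hα.apply_of_tail_le h2 hik (by omega)]
      linarith
    · rw [hα.apply_of_tail_eq h2 hik hti]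
      norm_num
  · rw [hα.1]
    norm_num

theorem prod_Icc_pos (hα : SatisfiesTailRecursion k t α) (ht : TailIndicesAdmissible k t)
    {a b : ℕ} (ha : 2 ≤ a) (hb : b ≤ k) : 0 < ∏ m ∈ Icc a b, α m :=
  prod_pos fun m hm => one_pos.trans (hα.one_lt ht m (by grind) (by grind))

theorem le_two (hα : SatisfiesTailRecursion k t α) (ht : TailIndicesAdmissible k t) {i : ℕ}
    (h2 : 2 ≤ i) (hik : i ≤ k) : α i ≤ 2 := by
  rcases hik.lt_or_eq with hik | rfl
  · rcases (ht i h2 hik).2.lt_or_eq with hti | hti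
    · rw [hα.apply_of_tail_le h2 hik (by omega)]
      have hP : 0 < ∏ m ∈ Icc (i + 1) (t i), α m := hα.prod_Icc_pos ht (by omega) (by omega)
      linarith [one_div_pos.2 hP]
    · exact (hα.apply_of_tail_eq h2 hik hti).le
  · exact hα.1.le

theorem le_of_tail_le (hα : SatisfiesTailRecursion k t α) (hω : SatisfiesTailRecursion k t' ω)
    (ht : TailIndicesAdmissible k t) (ht' : TailIndicesAdmissible k t') {n : ℕ} (hn : 2 ≤ n)
    (htt' : ∀ i, n ≤ i → i < k → t i ≤ t' i) :
    ∀ i, n ≤ i → i ≤ k → α i ≤ ω i := by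
  refine Nat.strong_decreasing_induction ⟨k, fun m hm _ hmk => absurd hmk (by omega)⟩ ?_
  intro i ih hni hik
  rcases hik.lt_or_eq with hik | rfl
  · have h2 : 2 ≤ i := hn.trans hni
    rcases (ht' i h2 hik).2.lt_or_eq with hti' | hti'
    · have hti : t i ≤ t' i := htt' i hni hik
      rw [hα.apply_of_tail_le h2 hik (by omega), hω.apply_of_tail_le h2 hik (by omega)]
      have hprod : ∏ m ∈ Icc (i + 1) (t i), α m ≤ ∏ m ∈ Icc (i + 1) (t' i), ω m :=
        prod_Icc_le_prod_Icc hti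
          (fun m hm => (one_pos.trans (hα.one_lt ht m (by grind) (by grind))).le)
          (fun m hm => ih m (by grind) (by grind) (by grind))
          (fun m hm => (hω.one_lt ht' m (by grind) (by grind)).le)
      have hP : 0 < ∏ m ∈ Icc (i + 1) (t i), α m := hα.prod_Icc_pos ht (by omega) (by omega)
      exact sub_le_sub_left (one_div_le_one_div_of_le hP hprod) 2
    · rw [hω.apply_of_tail_eq h2 hik hti']
      exact hα.le_two ht h2 hik.le
  · rw [hα.1, hω.1]

theorem lt_of_tail_lt (hα : SatisfiesTailRecursion k t α) (hω : SatisfiesTailRecursion k t' ω)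
    (ht : TailIndicesAdmissible k t) (ht' : TailIndicesAdmissible k t') {n : ℕ} (hn : 2 ≤ n)
    (htt' : ∀ i, n ≤ i → i < k → t i ≤ t' i) {i : ℕ} (hni : n ≤ i) (hik : i < k)
    (hlt : t i < t' i) : α i < ω i := by
  have h2 : 2 ≤ i := hn.trans hni
  have hti := (ht i h2 hik).1
  have hti' := (ht' i h2 hik).2
  have hP : 0 < ∏ m ∈ Icc (i + 1) (t i), α m := hα.prod_Icc_pos ht (by omega) (by omega)
  rw [hα.apply_of_tail_le h2 hik (by omega)]
  rcases hti'.lt_or_eq with hti' | hti'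
  · rw [hω.apply_of_tail_le h2 hik (by omega)]
    have hprod : ∏ m ∈ Icc (i + 1) (t i), α m < ∏ m ∈ Icc (i + 1) (t' i), ω m :=
      prod_Icc_lt_prod_Icc (by omega) hlt
        (fun m hm => (one_pos.trans (hα.one_lt ht m (by grind) (by grind))).le)
        (fun m hm => hα.le_of_tail_le hω ht ht' hn htt' m (by grind) (by grind))
        (fun m hm => hω.one_lt ht' m (by grind) (by grind))
    exact sub_lt_sub_left (one_div_lt_one_div_of_lt hP hprod) 2
  · rw [hω.apply_of_tail_eq h2 hik hti']
    linarith [one_div_pos.2 hP]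

end SatisfiesTailRecursion

theorem alpha_monotone_in_tail_index_general (k : ℕ) (t : ℕ → ℕ)
    (ht : ∀ j, 1 ≤ j → j ≤ k - 1 → j + 2 ≤ t (j + 1) ∧ t (j + 1) ≤ k + 1)
    (j₀ : ℕ) (hj₀₁ : 1 ≤ j₀) (hj₀₂ : j₀ ≤ k - 1) (hj₀k : t (j₀ + 1) ≤ k)
    (α ω : ℕ → ℝ)
    (hα : SatisfiesTailRecursion k t α)
    (hω : SatisfiesTailRecursion k
      (Function.update t (j₀ + 1) (t (j₀ + 1) + 1)) ω) :
    (∀ l, j₀ < l → l ≤ k - 1 → ω (l + 1) = α (l + 1)) ∧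
    ω (j₀ + 1) > α (j₀ + 1) ∧
    (∀ l, 1 ≤ l → l < j₀ → ω (l + 1) ≥ α (l + 1)) := by
  set t' := Function.update t (j₀ + 1) (t (j₀ + 1) + 1)
  have hj₀ := ht j₀ hj₀₁ hj₀₂
  have hadm : TailIndicesAdmissible k t := fun i h2 hik => by
    obtain ⟨j, rfl⟩ : ∃ j, i = j + 1 := ⟨i - 1, by omega⟩
    have := ht j (by omega) (by omega)
    omega
  have hadm' : TailIndicesAdmissible k t' := hadm.update_succ hj₀k
  have hle : ∀ i, 2 ≤ i → i < k → t i ≤ t' i := fun i _ _ => by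
    rcases eq_or_ne i (j₀ + 1) with rfl | hi
    · simp [t']
    · simp [t', Function.update_of_ne hi]
  have heq : ∀ i, j₀ + 2 ≤ i → i < k → t' i = t i :=
    fun i hi _ => Function.update_of_ne (by omega) _ _
  refine ⟨fun l hl hlk => le_antisymm ?_ ?_, ?_, fun l hl hlj₀ => ?_⟩
  · exact hω.le_of_tail_le hα hadm' hadm (n := j₀ + 2) (by omega)
      (fun i hi hik => (heq i hi hik).le) (l + 1) (by omega) (by omega)
  · exact hα.le_of_tail_le hω hadm hadm' (n := j₀ + 2) (by omega)
      (fun i hi hik => (heq i hi hik).ge) (l + 1) (by omega) (by omega)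
  · exact hα.lt_of_tail_lt hω hadm hadm' le_rfl hle (by omega) (by omega) (by simp [t'])
  · exact hα.le_of_tail_le hω hadm hadm' le_rfl hle (l + 1) (by omega) (by omega)

/-- Monotonicity of the exponents in the tail indices: increasing one tail
index `t (j₀+1) ≤ k` by `1` strictly increases the exponent `α (j₀+1)`, leaves
exponents with larger index unchanged, and does not decrease exponents with
smaller index. -/
theorem alpha_monotone_in_tail_index (k : ℕ) (hk : 2 ≤ k) (t : ℕ → ℕ)
    (ht : ∀ j, 1 ≤ j → j ≤ k - 1 → j + 2 ≤ t (j + 1) ∧ t (j + 1) ≤ k + 1)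
    (j₀ : ℕ) (hj₀₁ : 1 ≤ j₀) (hj₀₂ : j₀ ≤ k - 1) (hj₀k : t (j₀ + 1) ≤ k)
    (α ω : ℕ → ℝ)
    (hα : SatisfiesTailRecursion k t α)
    (hω : SatisfiesTailRecursion k
      (Function.update t (j₀ + 1) (t (j₀ + 1) + 1)) ω) :
    (∀ l, j₀ < l → l ≤ k - 1 → ω (l + 1) = α (l + 1)) ∧
    ω (j₀ + 1) > α (j₀ + 1) ∧
    (∀ l, 1 ≤ l → l < j₀ → ω (l + 1) ≥ α (l + 1)) :=
  alpha_monotone_in_tail_index_general k t ht j₀ hj₀₁ hj₀₂ hj₀k α ω hα hω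
end
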